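/- For the Werner-Holevo (transpose depolarizing) channels κᵀ_{d,p} and κᵀ_{d,q} with p, q ∈ [-1/(d-1), 1/(d+1)], the superfidelity between their Jamiołkowski states equals (1/d²)·(1 + (d²-1)pq + (d²-1)·√((1-p²)(1-q²))). -/

import Mathlib

/-! The Jamiołkowski state of `κᵀ_{d,p}` is `a • S + b • 1` with `S` the swap of the two tensor
factors. Since `S * S = 1` and `tr S = d`, every trace of a product of two such states is explicit:
`tr (ρ_p ρ_q) = (1 + (d² - 1) p q) / d²`, so `1 - tr ρ_p² = (d² - 1)(1 - p²) / d²`, and the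
common factor `(d² - 1) / d²` comes out of the product of the two square roots. -/

open Matrix

noncomputable def sG {n : Type*} [Fintype n]
    (ρ σ : Matrix n n ℂ) : ℝ :=
  (trace (ρ * σ)).re +
    Real.sqrt (1 - (trace (ρ * ρ)).re) * Real.sqrt (1 - (trace (σ * σ)).re)

/-- Jamiołkowski state of the Werner-Holevo (transpose depolarizing) channel
κᵀ_{d,p}: ρ = (p/d)·S + (1-p)·𝟙/d², where S is the swap operator. -/
noncomputable def wernerHolevoJam (d : ℕ) (p : ℝ) :
    Matrix (Fin d × Fin d) (Fin d × Fin d) ℂ :=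
  ((p : ℂ) / d) • (Matrix.of fun a b =>
      if a.1 = b.2 ∧ a.2 = b.1 then (1 : ℂ) else 0) +
    (((1 - p : ℝ) : ℂ) / (d ^ 2 : ℂ)) • (1 : Matrix (Fin d × Fin d) (Fin d × Fin d) ℂ)

namespace Matrix

variable {n R : Type*} [DecidableEq n]

theorem trace_smul_add_smul_one_mul [Fintype n] [CommRing R] {P : Matrix n n R}
    (hP : P * P = 1) (a b a' b' : R) :
    trace ((a • P + b • 1) * (a' • P + b' • 1)) =
      (a * a' + b * b') * Fintype.card n + (a * b' + b * a') * trace P := by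
  simp only [add_mul, mul_add, smul_mul_smul, hP, mul_one, one_mul, trace_add, trace_smul,
    trace_one, smul_eq_mul]
  ring

variable (n R)

def swapMatrix [Zero R] [One R] : Matrix (n × n) (n × n) R :=
  Equiv.Perm.permMatrix R (Equiv.prodComm n n)

theorem swapMatrix_apply [Zero R] [One R] (a b : n × n) :
    swapMatrix n R a b = if a.1 = b.2 ∧ a.2 = b.1 then 1 else 0 := by
  simp [swapMatrix, Prod.ext_iff, eq_comm, and_comm]

theorem swapMatrix_mul_self [Fintype n] [NonAssocSemiring R] :
    swapMatrix n R * swapMatrix n R = 1 := by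
  rw [swapMatrix, ← permMatrix_mul]
  convert permMatrix_one
  ext <;> rfl

theorem trace_swapMatrix [Fintype n] [AddCommMonoidWithOne R] :
    trace (swapMatrix n R) = Fintype.card n := by
  have hfix : Function.fixedPoints (Equiv.prodComm n n) =
      ↑(Finset.univ.diag : Finset (n × n)) := by
    ext ⟨i, j⟩
    simp [Function.IsFixedPt, eq_comm]
  rw [swapMatrix, trace_permutation, hfix, Set.ncard_coe_finset, Finset.diag_card,
    Finset.card_univ]

end Matrix

theorem Real.sqrt_mul_mul_sqrt_mul {c x : ℝ} (hc : 0 ≤ c) (hx : 0 ≤ x) (y : ℝ) :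
    √(c * x) * √(c * y) = c * √(x * y) := by
  rw [← sqrt_mul (mul_nonneg hc hx), show c * x * (c * y) = c ^ 2 * (x * y) by ring,
    sqrt_mul (sq_nonneg c), sqrt_sq hc]

theorem sq_le_one_of_mem_Icc {D p : ℝ} (hD : 2 ≤ D)
    (hp : p ∈ Set.Icc (-(1 / (D - 1))) (1 / (D + 1))) : p ^ 2 ≤ 1 := by
  have hlow : 1 / (D - 1) ≤ 1 := by rw [div_le_one (by linarith)]; linarith
  have hupp : 1 / (D + 1) ≤ 1 := by rw [div_le_one (by linarith)]; linarith
  exact sq_le_one_iff_abs_le_one p |>.2 (abs_le.2 ⟨by linarith [hp.1], by linarith [hp.2]⟩)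

theorem wernerHolevoJam_eq (d : ℕ) (p : ℝ) :
    wernerHolevoJam d p =
      ((p : ℂ) / d) • swapMatrix (Fin d) ℂ + (((1 - p : ℝ) : ℂ) / (d ^ 2 : ℂ)) • 1 := by
  ext a b
  simp [wernerHolevoJam, swapMatrix_apply]

theorem re_trace_wernerHolevoJam_mul {d : ℕ} (hd : d ≠ 0) (p q : ℝ) :
    (trace (wernerHolevoJam d p * wernerHolevoJam d q)).re =
      (1 + ((d : ℝ) ^ 2 - 1) * p * q) / d ^ 2 := by
  rw [wernerHolevoJam_eq, wernerHolevoJam_eq,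
    trace_smul_add_smul_one_mul (swapMatrix_mul_self _ _), trace_swapMatrix, Fintype.card_prod,
    Fintype.card_fin]
  have hdC : (d : ℂ) ≠ 0 := Nat.cast_ne_zero.mpr hd
  rw [← Complex.ofReal_re ((1 + ((d : ℝ) ^ 2 - 1) * p * q) / d ^ 2)]
  congr 1
  push_cast
  field_simp
  ring

theorem one_sub_re_trace_wernerHolevoJam_mul_self {d : ℕ} (hd : d ≠ 0) (p : ℝ) :
    1 - (trace (wernerHolevoJam d p * wernerHolevoJam d p)).re =
      ((d : ℝ) ^ 2 - 1) / d ^ 2 * (1 - p ^ 2) := by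
  rw [re_trace_wernerHolevoJam_mul hd]
  field_simp
  ring

theorem superfidelity_werner_holevo_general (d : ℕ) (hd : 2 ≤ d)
    (p q : ℝ)
    (hp : -(1 / ((d : ℝ) - 1)) ≤ p ∧ p ≤ 1 / ((d : ℝ) + 1)) :
    sG (wernerHolevoJam d p) (wernerHolevoJam d q) =
      (1 / (d ^ 2 : ℝ)) *
        (1 + ((d ^ 2 : ℝ) - 1) * p * q +
          ((d ^ 2 : ℝ) - 1) * Real.sqrt ((1 - p ^ 2) * (1 - q ^ 2))) := by
  have hd0 : d ≠ 0 := by omega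
  have hdR : (2 : ℝ) ≤ d := by exact_mod_cast hd
  have hc : 0 ≤ ((d : ℝ) ^ 2 - 1) / d ^ 2 := div_nonneg (by nlinarith) (sq_nonneg _)
  rw [sG, re_trace_wernerHolevoJam_mul hd0, one_sub_re_trace_wernerHolevoJam_mul_self hd0,
    one_sub_re_trace_wernerHolevoJam_mul_self hd0,
    Real.sqrt_mul_mul_sqrt_mul hc (sub_nonneg.2 (sq_le_one_of_mem_Icc hdR hp))]
  ring

theorem superfidelity_werner_holevo (d : ℕ) (hd : 2 ≤ d)
    (p q : ℝ)
    (hp : -(1 / ((d : ℝ) - 1)) ≤ p ∧ p ≤ 1 / ((d : ℝ) + 1))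
    (hq : -(1 / ((d : ℝ) - 1)) ≤ q ∧ q ≤ 1 / ((d : ℝ) + 1)) :
    sG (wernerHolevoJam d p) (wernerHolevoJam d q) =
      (1 / (d ^ 2 : ℝ)) *
        (1 + ((d ^ 2 : ℝ) - 1) * p * q +
          ((d ^ 2 : ℝ) - 1) * Real.sqrt ((1 - p ^ 2) * (1 - q ^ 2))) :=
  superfidelity_werner_holevo_general d hd p q hp
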